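/- Let G be a unicyclic graph on n vertices that is not isomorphic to K_{1,n-1}^+. Then there exist adjacent vertices u and v in G such that u has a neighbor that is neither v nor a neighbor of v, and v has a neighbor that is neither u nor a neighbor of u. -/

import Mathlib

/-!
If `G` has no triangle, three consecutive edges `a b`, `b c`, `c d` of its cycle give the pair
`(b, c)`, with private neighbours `a` and `d`. Otherwise the cycle is a triangle `T`, and it is the
only triangle of `G`. A path `t a b` leaving `T`, or two vertices outside `T` attached to different
vertices of `T`, would then produce a good pair; without these, connectivity forces every vertex
outside `T` to be a leaf hanging from one and the same vertex `p ∈ T`, so `G ≅ K_{1,n-1}^+`.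
-/
open SimpleGraph Finset

open scoped Classical in
/-- The adjacency matrix of a graph over `ℝ` (using classical decidability). -/
noncomputable def adjMat {V : Type*} [Fintype V] [DecidableEq V] (G : SimpleGraph V) :
    Matrix V V ℝ :=
  fun a b => if G.Adj a b then 1 else 0

theorem adjMat_isHermitian {V : Type*} [Fintype V] [DecidableEq V] (G : SimpleGraph V) :
    (adjMat G).IsHermitian := by
  ext a b
  rw [Matrix.conjTranspose_apply]
  by_cases h : G.Adj a b
  · simp [adjMat, h, h.symm]
  · simp [adjMat, h, mt (fun h' : G.Adj b a => h'.symm) h]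

/-- The spectral radius (specRad) (largest adjacency eigenvalue) of a graph. -/
noncomputable def specRad {V : Type*} [Fintype V] [DecidableEq V]
    (G : SimpleGraph V) : ℝ :=
  ⨆ a : V, (adjMat_isHermitian G).eigenvalues a

/-- A cactus: any two distinct cycles (distinct as edge sets) share at most one vertex. -/
def IsCactus {V : Type*} [DecidableEq V] (G : SimpleGraph V) : Prop :=
  ∀ ⦃u v : V⦄ (c₁ : G.Walk u u) (c₂ : G.Walk v v), c₁.IsCycle → c₂.IsCycle →
    c₁.edges.toFinset ≠ c₂.edges.toFinset →
      (c₁.support.toFinset ∩ c₂.support.toFinset).card ≤ 1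

/-- A unicyclic graph: connected with exactly one cycle (one cycle edge set). -/
def Unicyclic {V : Type*} [DecidableEq V] (G : SimpleGraph V) : Prop :=
  G.Connected ∧ ∃! E : Finset (Sym2 V), ∃ (w : V) (c : G.Walk w w),
    c.IsCycle ∧ c.edges.toFinset = E

/-- The star `K_{1,n-1}` on `Fin n` with center `0`. -/
def starGraph (n : ℕ) : SimpleGraph (Fin n) where
  Adj a b := a ≠ b ∧ ((a : ℕ) = 0 ∨ (b : ℕ) = 0)
  symm := ⟨fun a b h => by tauto⟩
  loopless := ⟨fun a h => by tauto⟩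

/-- `K_{1,n-1}^+`: the star plus one edge between the leaves `1` and `2`. -/
def starPlus (n : ℕ) : SimpleGraph (Fin n) where
  Adj a b := a ≠ b ∧ ((a : ℕ) = 0 ∨ (b : ℕ) = 0 ∨ ((a : ℕ) ≤ 2 ∧ (b : ℕ) ≤ 2))
  symm := ⟨fun a b h => by tauto⟩
  loopless := ⟨fun a h => by tauto⟩

/-- `H_n`: the star `K_{1,n-1}` plus `⌊(n-1)/2⌋` independent edges `(1,2), (3,4), …`
between pairs of leaves. -/
def Hgraph (n : ℕ) : SimpleGraph (Fin n) where
  Adj a b := a ≠ b ∧ ((a : ℕ) = 0 ∨ (b : ℕ) = 0 ∨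
    ((a : ℕ) % 2 = 1 ∧ (b : ℕ) = a + 1) ∨ ((b : ℕ) % 2 = 1 ∧ (a : ℕ) = b + 1))
  symm := ⟨fun a b h => by tauto⟩
  loopless := ⟨fun a h => by tauto⟩

/-- Rewiring: delete the edges `v w` and add the edges `u w` for `w ∈ S`. -/
def rewire {V : Type*} (G : SimpleGraph V) (u v : V) (S : Set V) : SimpleGraph V :=
  SimpleGraph.fromEdgeSet ((G.edgeSet \ {e | ∃ w ∈ S, e = s(v, w)}) ∪ {e | ∃ w ∈ S, e = s(u, w)})

/-- An edge lies in a triangle of `G`. -/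
def InTriangle {V : Type*} (G : SimpleGraph V) (e : Sym2 V) : Prop :=
  ∃ a b c : V, G.Adj a b ∧ G.Adj b c ∧ G.Adj a c ∧
    (e = s(a, b) ∨ e = s(b, c) ∨ e = s(a, c))

namespace SimpleGraph

variable {V : Type*} {G : SimpleGraph V}

/-- `a` is a neighbour of `u` outside the closed neighbourhood `N[v]`. -/
def HasPrivateNeighbor (G : SimpleGraph V) (u v : V) : Prop :=
  ∃ a, G.Adj u a ∧ a ≠ v ∧ ¬ G.Adj v a

def IsGoodPair (G : SimpleGraph V) (u v : V) : Prop :=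
  G.Adj u v ∧ G.HasPrivateNeighbor u v ∧ G.HasPrivateNeighbor v u

theorem isGoodPair_of_cliqueFree_three (hG : G.CliqueFree 3) {a b c d : V} (hab : G.Adj a b)
    (hbc : G.Adj b c) (hcd : G.Adj c d) (hac : a ≠ c) (hbd : b ≠ d) : G.IsGoodPair b c :=
  ⟨hbc,
    ⟨a, hab.symm, hac, isIndepSet_neighborSet_of_triangleFree _ hG b hbc hab.symm hac.symm⟩,
    ⟨d, hcd, hbd.symm, isIndepSet_neighborSet_of_triangleFree _ hG c hbc.symm hcd hbd⟩⟩

theorem exists_isGoodPair_of_isCycle (hG : G.CliqueFree 3) {w : V} {c : G.Walk w w}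
    (hc : c.IsCycle) : ∃ u v, G.IsGoodPair u v := by
  match c, hc, hc.three_le_length with
  | .cons h₁ (.cons h₂ (.cons h₃ q)), hc, _ =>
    have hnodup := hc.support_nodup
    simp only [Walk.support_cons, List.tail_cons, List.nodup_cons, List.mem_cons] at hnodup
    exact ⟨_, _, isGoodPair_of_cliqueFree_three hG h₁ h₂ h₃
      (fun h => hnodup.2.1 (h ▸ q.end_mem_support))
      (fun h => hnodup.1 (.inr (h ▸ q.start_mem_support)))⟩

theorem Walk.isCycle_triangle {a b c : V} (hab : G.Adj a b) (hbc : G.Adj b c) (hca : G.Adj c a) :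
    (Walk.cons hab (.cons hbc (.cons hca .nil))).IsCycle := by
  simp [Walk.cons_isCycle_iff, hab.ne, hbc.ne, hca.ne, hca.ne.symm, hab.ne.symm]

section Unicyclic

variable [DecidableEq V]

theorem Unicyclic.edges_toFinset_eq (hG : Unicyclic G) {u v : V} {c₁ : G.Walk u u}
    {c₂ : G.Walk v v} (h₁ : c₁.IsCycle) (h₂ : c₂.IsCycle) :
    c₁.edges.toFinset = c₂.edges.toFinset := by
  obtain ⟨E, -, hE⟩ := hG.2
  rw [hE _ ⟨u, c₁, h₁, rfl⟩, hE _ ⟨v, c₂, h₂, rfl⟩]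

theorem Unicyclic.mem_of_triangle (hG : Unicyclic G) {x y z a b c : V} (hxy : G.Adj x y)
    (hyz : G.Adj y z) (hzx : G.Adj z x) (hab : G.Adj a b) (hbc : G.Adj b c) (hca : G.Adj c a) :
    a = x ∨ a = y ∨ a = z := by
  have hab_mem : s(a, b) ∈ (Walk.cons hab (.cons hbc (.cons hca .nil))).edges.toFinset := by simp
  rw [hG.edges_toFinset_eq (Walk.isCycle_triangle hab hbc hca)
    (Walk.isCycle_triangle hxy hyz hzx)] at hab_mem
  simp only [Walk.edges_cons, Walk.edges_nil, List.toFinset_cons, List.toFinset_nil,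
    Finset.mem_insert, Sym2.eq_iff] at hab_mem
  tauto

end Unicyclic

def CoversTriangles (G : SimpleGraph V) (T : Set V) : Prop :=
  ∀ a b c, G.Adj a b → G.Adj b c → G.Adj c a → a ∈ T

section CoversTriangles

variable {T : Set V}

theorem CoversTriangles.not_adj (hTri : G.CoversTriangles T) {a b c : V} (hab : G.Adj a b)
    (hbc : G.Adj b c) (hout : a ∉ T ∨ b ∉ T ∨ c ∉ T) : ¬ G.Adj c a := by
  intro hca
  rcases hout with h | h | h
  exacts [h (hTri _ _ _ hab hbc hca), h (hTri _ _ _ hbc hca hab), h (hTri _ _ _ hca hab hbc)]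

theorem CoversTriangles.isGoodPair_of_path_leaving (hTri : G.CoversTriangles T)
    (hT : G.IsClique T) {t t' a b : V} (ht : t ∈ T) (ht' : t' ∈ T) (htt' : t ≠ t')
    (ha : a ∉ T) (hta : G.Adj t a) (hab : G.Adj a b) (hbt : b ≠ t) : G.IsGoodPair t a :=
  ⟨hta, ⟨t', hT ht ht' htt', fun h => ha (h ▸ ht'),
      hTri.not_adj (hT ht' ht htt'.symm) hta (.inr (.inr ha))⟩,
    ⟨b, hab, hbt, hTri.not_adj hab.symm hta.symm (.inr (.inl ha))⟩⟩

theorem CoversTriangles.isGoodPair_of_distinct_attachments (hTri : G.CoversTriangles T)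
    (hT : G.IsClique T) {t t' a a' : V} (ht : t ∈ T) (ht' : t' ∈ T) (htt' : t ≠ t')
    (ha : a ∉ T) (ha' : a' ∉ T) (hta : G.Adj t a) (hta' : G.Adj t' a') : G.IsGoodPair t t' :=
  ⟨hT ht ht' htt',
    ⟨a, hta, fun h => ha (h ▸ ht'), hTri.not_adj hta.symm (hT ht ht' htt') (.inl ha)⟩,
    ⟨a', hta', fun h => ha' (h ▸ ht),
      hTri.not_adj hta'.symm (hT ht' ht htt'.symm) (.inl ha')⟩⟩

end CoversTriangles

section Pendant

variable {T : Set V}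

theorem Connected.mem_or_exists_adj (hconn : G.Connected) (hT : T.Nonempty)
    (hpend : ∀ t ∈ T, ∀ a ∉ T, G.Adj t a → ∀ b, G.Adj a b → b = t) (v : V) :
    v ∈ T ∨ ∃ t ∈ T, G.Adj t v := by
  obtain ⟨t₀, ht₀⟩ := hT
  induction (reachable_iff_reflTransGen _ _).1 (hconn.preconnected t₀ v) with
  | refl => exact .inl ht₀
  | @tail b c _ hbc ih =>
    rcases ih with hb | ⟨t, ht, htb⟩
    · exact .inr ⟨b, hb, hbc⟩
    · by_cases hb : b ∈ T
      · exact .inr ⟨b, hb, hbc⟩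
      · exact .inl (hpend t ht b hb htb c hbc ▸ ht)

theorem Connected.exists_center (hconn : G.Connected) (hT : T.Nonempty)
    (hpend : ∀ t ∈ T, ∀ a ∉ T, G.Adj t a → ∀ b, G.Adj a b → b = t)
    (hattach :
      ∀ t ∈ T, ∀ t' ∈ T, ∀ a ∉ T, ∀ a' ∉ T, G.Adj t a → G.Adj t' a' → t = t') :
    ∃ p ∈ T, ∀ a ∉ T, G.Adj p a ∧ ∀ b, G.Adj a b → b = p := by
  by_cases hout : ∃ a, a ∉ T
  · obtain ⟨a₀, ha₀⟩ := hout
    obtain ⟨p, hp, hpa₀⟩ := (hconn.mem_or_exists_adj hT hpend a₀).resolve_left ha₀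
    refine ⟨p, hp, fun a ha => ?_⟩
    obtain ⟨t, ht, hta⟩ := (hconn.mem_or_exists_adj hT hpend a).resolve_left ha
    obtain rfl := hattach t ht p hp a ha a₀ ha₀ hta hpa₀
    exact ⟨hta, hpend t ht a ha hta⟩
  · obtain ⟨p, hp⟩ := hT
    exact ⟨p, hp, fun a ha => (ha (not_exists_not.1 hout a)).elim⟩

theorem Connected.exists_center_of_forall_not_isGoodPair (hconn : G.Connected)
    (hTri : G.CoversTriangles T) (hT : G.IsClique T) (hT₂ : T.Nontrivial)
    (hno : ∀ u v, ¬ G.IsGoodPair u v) :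
    ∃ p ∈ T, ∀ a ∉ T, G.Adj p a ∧ ∀ b, G.Adj a b → b = p := by
  refine hconn.exists_center hT₂.nonempty (fun t ht a ha hta b hab => ?_)
    (fun t ht t' ht' a ha a' ha' hta hta' => ?_)
  · by_contra hbt
    obtain ⟨t', ht', ht't⟩ := hT₂.exists_ne t
    exact hno t a (hTri.isGoodPair_of_path_leaving hT ht ht' ht't.symm ha hta hab hbt)
  · by_contra htt'
    exact hno t t' (hTri.isGoodPair_of_distinct_attachments hT ht ht' htt' ha ha' hta hta')

theorem adj_iff_of_pendant (hT : G.IsClique T) {p : V} (hp : p ∈ T)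
    (hpend : ∀ a ∉ T, G.Adj p a ∧ ∀ b, G.Adj a b → b = p) (a b : V) :
    G.Adj a b ↔ a ≠ b ∧ (a = p ∨ b = p ∨ a ∈ T ∧ b ∈ T) := by
  constructor
  · intro hab
    refine ⟨hab.ne, ?_⟩
    by_cases ha : a ∈ T
    · by_cases hb : b ∈ T
      · exact .inr (.inr ⟨ha, hb⟩)
      · exact .inl ((hpend b hb).2 a hab.symm)
    · exact .inr (.inl ((hpend a ha).2 b hab))
  · rintro ⟨hne, rfl | rfl | ⟨ha, hb⟩⟩
    · by_cases hb : b ∈ T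
      exacts [hT hp hb hne, (hpend b hb).1]
    · by_cases ha : a ∈ T
      exacts [hT ha hp hne, ((hpend a ha).1).symm]
    · exact hT ha hb hne

end Pendant

end SimpleGraph

theorem nonempty_iso_starPlus {n : ℕ} {G : SimpleGraph (Fin n)} {T : Finset (Fin n)} {p : Fin n}
    (hT : T.card = 3) (hp : p ∈ T)
    (hadj : ∀ a b, G.Adj a b ↔ a ≠ b ∧ (a = p ∨ b = p ∨ a ∈ T ∧ b ∈ T)) :
    Nonempty (G ≃g starPlus n) := by
  obtain ⟨q, r, hqr, hTpqr⟩ :=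
    card_eq_two.1 (by rw [card_erase_of_mem hp, hT] : (T.erase p).card = 2)
  have hpq : p ≠ q := fun h => notMem_erase p T (by rw [hTpqr, h]; simp)
  have hpr : p ≠ r := fun h => notMem_erase p T (by rw [hTpqr, h]; simp)
  have hn : 3 ≤ n := hT ▸ (card_le_univ T).trans_eq (Fintype.card_fin n)
  obtain ⟨σ, hσ⟩ := Equiv.Perm.exists_extending_pair ![p, q, r]
    ![⟨0, by omega⟩, ⟨1, by omega⟩, ⟨2, by omega⟩]
    (by intro i j; fin_cases i <;> fin_cases j <;> simp [hpq, hpr, hqr, hpq.symm, hpr.symm,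
      hqr.symm])
    (by intro i j; fin_cases i <;> fin_cases j <;> simp)
  have hσ₀ : (σ p : ℕ) = 0 := congrArg Fin.val (hσ 0)
  have hσ₁ : (σ q : ℕ) = 1 := congrArg Fin.val (hσ 1)
  have hσ₂ : (σ r : ℕ) = 2 := congrArg Fin.val (hσ 2)
  have hσ_eq : ∀ a b, a = b ↔ (σ a : ℕ) = σ b := fun a b => by
    rw [← σ.injective.eq_iff, Fin.ext_iff]
  have hσp : ∀ a, (σ a : ℕ) = 0 ↔ a = p := fun a => by rw [hσ_eq, hσ₀]
  have hσT : ∀ a, (σ a : ℕ) ≤ 2 ↔ a ∈ T := fun a => by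
    rw [← insert_erase hp, hTpqr]
    simp only [mem_insert, mem_singleton, hσ_eq a, hσ₀, hσ₁, hσ₂]
    omega
  refine ⟨⟨σ, fun {a b} => ?_⟩⟩
  rw [hadj]
  show σ a ≠ σ b ∧ _ ↔ _
  rw [σ.injective.ne_iff, hσp, hσp, hσT, hσT]

theorem unicyclic_exists_good_adjacent_pair (n : ℕ) (G : SimpleGraph (Fin n))
    (hG : Unicyclic G) (hiso : ¬ Nonempty (G ≃g starPlus n)) :
    ∃ u v : Fin n, G.Adj u v ∧
      (∃ a, G.Adj u a ∧ a ≠ v ∧ ¬ G.Adj v a) ∧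
      (∃ b, G.Adj v b ∧ b ≠ u ∧ ¬ G.Adj u b) := by
  by_cases hfree : G.CliqueFree 3
  · obtain ⟨-, ⟨w, c, hc, -⟩, -⟩ := hG.2
    exact exists_isGoodPair_of_isCycle hfree hc
  obtain ⟨s, hs⟩ : ∃ s, G.IsNClique 3 s := by simpa [CliqueFree] using hfree
  obtain ⟨x, y, z, hxy, hxz, hyz, hsxyz⟩ := is3Clique_iff.1 hs
  have hTri : G.CoversTriangles s := fun a b c hab hbc hca => by
    simpa [hsxyz] using hG.mem_of_triangle hxy hyz hxz.symm hab hbc hca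
  have hs₂ : (s : Set (Fin n)).Nontrivial :=
    one_lt_card_iff_nontrivial.1 (by rw [hs.card_eq]; norm_num)
  by_contra hno
  obtain ⟨p, hp, hpend⟩ := hG.1.exists_center_of_forall_not_isGoodPair hTri hs.isClique hs₂
    fun u v h => hno ⟨u, v, h⟩
  exact hiso (nonempty_iso_starPlus hs.card_eq hp (adj_iff_of_pendant hs.isClique hp hpend))
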